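/- Let V be a unital associative 𝔽-algebra equipped with 2-fold derivations D₁,…,D_ℓ : V → V⊗V. For a = 0,1 let B⁽ᵃ⁾_{ij} ∈ V⊗V (1 ≤ i,j ≤ ℓ) satisfy the skewsymmetry B⁽ᵃ⁾_{ij} = −(B⁽ᵃ⁾_{ji})^σ, and define the bracket {f,g}_a := m(Σ_{i,j=1}^{ℓ} (D_j g) • B⁽ᵃ⁾_{ij} • (D_i f)^σ) ∈ V. Suppose h₀, h₁, …, h_N ∈ V satisfy the Lenard–Magri recursion {h_n, u}₀ = {h_{n+1}, u}₁ for every u ∈ V and every n = 0,…,N−1. Then {h_n, h_m}₀ ∈ [V,V] and {h_n, h_m}₁ ∈ [V,V] for all n,m ∈ {0,…,N}; that is, all the elements tr(h_n) ∈ V/[V,V] are in involution with respect to both induced brackets on V/[V,V]. -/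

import Mathlib

/-!
Both brackets descend to alternating bilinear maps `V × V → V/[V,V]`: skewsymmetry of the
`B⁽ᵃ⁾` gives `{{g,f}}_a = -{{f,g}}_a^σ`, and `m(X^σ) ≡ m(X)` modulo commutators, so
`tr{f,g}_a = -tr{g,f}_a`, whence `tr{f,f}_a = 0` as `2` is invertible. For alternating
`P = tr{·,·}₀`, `Q = tr{·,·}₁` with `P(hₙ, ·) = Q(hₙ₊₁, ·)`, the shift
`Q(hₙ, hₘ₊₁) = -P(hₘ, hₙ) = P(hₙ, hₘ) = Q(hₙ₊₁, hₘ)` moves the two indices towards each other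
until they meet or become adjacent, and alternation gives `0` there.
-/

open TensorProduct LinearMap

section DPA

variable (𝔽 : Type) [Field 𝔽] (V : Type) [Ring V] [Algebra 𝔽 V]

/-- The swap `(u ⊗ v)^σ = v ⊗ u` on `V ⊗ V`. -/
noncomputable abbrev swap2 : V ⊗[𝔽] V ≃ₗ[𝔽] V ⊗[𝔽] V := TensorProduct.comm 𝔽 V V

/-- The cyclic permutation `(u ⊗ v ⊗ w)^σ = w ⊗ u ⊗ v` on `V ⊗ V ⊗ V = (V ⊗ V) ⊗ V`. -/
noncomputable def sigma3 : (V ⊗[𝔽] V) ⊗[𝔽] V ≃ₗ[𝔽] (V ⊗[𝔽] V) ⊗[𝔽] V :=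
  (TensorProduct.comm 𝔽 (V ⊗[𝔽] V) V).trans (TensorProduct.assoc 𝔽 V V V).symm

/-- Left multiplication `a · (u ⊗ v) = (a*u) ⊗ v` (outer bimodule structure). -/
noncomputable def lact2 (a : V) : V ⊗[𝔽] V →ₗ[𝔽] V ⊗[𝔽] V :=
  LinearMap.rTensor V (LinearMap.mulLeft 𝔽 a)

/-- Right multiplication `(u ⊗ v) · c = u ⊗ (v*c)` (outer bimodule structure). -/
noncomputable def ract2 (c : V) : V ⊗[𝔽] V →ₗ[𝔽] V ⊗[𝔽] V :=
  LinearMap.lTensor V (LinearMap.mulRight 𝔽 c)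

/-- `(u ⊗ v) ⋆₁ b = (u*b) ⊗ v`. -/
noncomputable def star1r (b : V) : V ⊗[𝔽] V →ₗ[𝔽] V ⊗[𝔽] V :=
  LinearMap.rTensor V (LinearMap.mulRight 𝔽 b)

/-- `a ⋆₁ (u ⊗ v) = u ⊗ (a*v)`. -/
noncomputable def star1l (a : V) : V ⊗[𝔽] V →ₗ[𝔽] V ⊗[𝔽] V :=
  LinearMap.lTensor V (LinearMap.mulLeft 𝔽 a)

/-- The `•`-product on `V ⊗ V`:  `(u ⊗ v) • (x ⊗ y) = (u*x) ⊗ (y*v)`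
(the multiplication of `V ⊗ Vᵒᵖ`). -/
noncomputable def bullet : V ⊗[𝔽] V →ₗ[𝔽] V ⊗[𝔽] V →ₗ[𝔽] V ⊗[𝔽] V :=
  TensorProduct.lift
    (((TensorProduct.mapBilinear (RingHom.id 𝔽) V V V V).comp (LinearMap.mul 𝔽 V)).compl₂
      ((LinearMap.mul 𝔽 V).flip))

/-- A `2`-fold bracket on `V`: an `𝔽`-bilinear map `V × V → V ⊗ V` satisfying the two
Leibniz rules `{{a,bc}} = {{a,b}}·c + b·{{a,c}}` and `{{ab,c}} = {{a,c}} ⋆₁ b + a ⋆₁ {{b,c}}`. -/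
def IsDoubleBracket (Br : V →ₗ[𝔽] V →ₗ[𝔽] V ⊗[𝔽] V) : Prop :=
  (∀ a b c : V, Br a (b * c) = ract2 𝔽 V c (Br a b) + lact2 𝔽 V b (Br a c)) ∧
  (∀ a b c : V, Br (a * b) c = star1r 𝔽 V b (Br a c) + star1l 𝔽 V a (Br b c))

variable {𝔽 V}

/-- `{{a, B}}_L` : apply the bracket to the first tensor factor. -/
noncomputable def brL (Br : V →ₗ[𝔽] V →ₗ[𝔽] V ⊗[𝔽] V) (a : V) :
    V ⊗[𝔽] V →ₗ[𝔽] (V ⊗[𝔽] V) ⊗[𝔽] V :=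
  LinearMap.rTensor V (Br a)

/-- `{{a, B}}_R` : apply the bracket to the second tensor factor. -/
noncomputable def brR (Br : V →ₗ[𝔽] V →ₗ[𝔽] V ⊗[𝔽] V) (a : V) :
    V ⊗[𝔽] V →ₗ[𝔽] (V ⊗[𝔽] V) ⊗[𝔽] V :=
  (TensorProduct.assoc 𝔽 V V V).symm.toLinearMap ∘ₗ LinearMap.lTensor V (Br a)

variable (𝔽 V)

/-- `ρ₂` : swap the last two tensor factors of `V ⊗ V ⊗ V`. -/
noncomputable def rho2 : (V ⊗[𝔽] V) ⊗[𝔽] V ≃ₗ[𝔽] (V ⊗[𝔽] V) ⊗[𝔽] V :=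
  (TensorProduct.assoc 𝔽 V V V).trans
    ((TensorProduct.congr (LinearEquiv.refl 𝔽 V) (TensorProduct.comm 𝔽 V V)).trans
      (TensorProduct.assoc 𝔽 V V V).symm)

variable {𝔽 V}

/-- Conjugated bullet action used to define the actions `•ᵢ` of `V ⊗ V` on `V ⊗ V ⊗ V`. -/
noncomputable def conjAct (β : V ⊗[𝔽] V →ₗ[𝔽] V ⊗[𝔽] V →ₗ[𝔽] V ⊗[𝔽] V)
    (ρ : (V ⊗[𝔽] V) ⊗[𝔽] V ≃ₗ[𝔽] (V ⊗[𝔽] V) ⊗[𝔽] V) :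
    V ⊗[𝔽] V →ₗ[𝔽] (V ⊗[𝔽] V) ⊗[𝔽] V →ₗ[𝔽] (V ⊗[𝔽] V) ⊗[𝔽] V :=
  (LinearMap.lcomp 𝔽 _ ρ.toLinearMap) ∘ₗ
    (LinearMap.llcomp 𝔽 ((V ⊗[𝔽] V) ⊗[𝔽] V) ((V ⊗[𝔽] V) ⊗[𝔽] V) ((V ⊗[𝔽] V) ⊗[𝔽] V)
      ρ.symm.toLinearMap) ∘ₗ
    (LinearMap.rTensorHom V) ∘ₗ β

variable (𝔽 V)

/-- The right action `X •₁ A`, i.e. `(x⊗y⊗z) •₁ (a⊗b) = x⊗(y*a)⊗(b*z)`;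
`bAct1R A X = X •₁ A`. -/
noncomputable def bAct1R : V ⊗[𝔽] V →ₗ[𝔽] (V ⊗[𝔽] V) ⊗[𝔽] V →ₗ[𝔽] (V ⊗[𝔽] V) ⊗[𝔽] V :=
  conjAct (bullet 𝔽 V).flip ((sigma3 𝔽 V).trans (sigma3 𝔽 V))

/-- The left action `A •₂ X`, i.e. `(a⊗b) •₂ (x⊗y⊗z) = (a*x)⊗y⊗(z*b)`. -/
noncomputable def bAct2L : V ⊗[𝔽] V →ₗ[𝔽] (V ⊗[𝔽] V) ⊗[𝔽] V →ₗ[𝔽] (V ⊗[𝔽] V) ⊗[𝔽] V :=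
  conjAct (bullet 𝔽 V) (rho2 𝔽 V)

/-- The right action `X •₃ A`, i.e. `(x⊗y⊗z) •₃ (a⊗b) = (x*a)⊗(b*y)⊗z`;
`bAct3R A X = X •₃ A`. -/
noncomputable def bAct3R : V ⊗[𝔽] V →ₗ[𝔽] (V ⊗[𝔽] V) ⊗[𝔽] V →ₗ[𝔽] (V ⊗[𝔽] V) ⊗[𝔽] V :=
  conjAct (bullet 𝔽 V).flip (LinearEquiv.refl 𝔽 ((V ⊗[𝔽] V) ⊗[𝔽] V))

/-- `a ⋆₁ (x⊗y⊗z) = x⊗(a*y)⊗z`. -/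
noncomputable def slot2L (a : V) : (V ⊗[𝔽] V) ⊗[𝔽] V →ₗ[𝔽] (V ⊗[𝔽] V) ⊗[𝔽] V :=
  LinearMap.rTensor V (LinearMap.lTensor V (LinearMap.mulLeft 𝔽 a))

/-- `(x⊗y⊗z) ⋆₁ b = x⊗(y*b)⊗z`. -/
noncomputable def slot2R (b : V) : (V ⊗[𝔽] V) ⊗[𝔽] V →ₗ[𝔽] (V ⊗[𝔽] V) ⊗[𝔽] V :=
  LinearMap.rTensor V (LinearMap.lTensor V (LinearMap.mulRight 𝔽 b))

/-- `a ⋆₂ (x⊗y⊗z) = x⊗y⊗(a*z)`. -/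
noncomputable def slot3L (a : V) : (V ⊗[𝔽] V) ⊗[𝔽] V →ₗ[𝔽] (V ⊗[𝔽] V) ⊗[𝔽] V :=
  LinearMap.lTensor (V ⊗[𝔽] V) (LinearMap.mulLeft 𝔽 a)

/-- `(x⊗y⊗z) ⋆₂ b = (x*b)⊗y⊗z`. -/
noncomputable def slot1R (b : V) : (V ⊗[𝔽] V) ⊗[𝔽] V →ₗ[𝔽] (V ⊗[𝔽] V) ⊗[𝔽] V :=
  LinearMap.rTensor V (LinearMap.rTensor V (LinearMap.mulRight 𝔽 b))

/-- outer left: `a · (x⊗y⊗z) = (a*x)⊗y⊗z`. -/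
noncomputable def slot1L (a : V) : (V ⊗[𝔽] V) ⊗[𝔽] V →ₗ[𝔽] (V ⊗[𝔽] V) ⊗[𝔽] V :=
  LinearMap.rTensor V (LinearMap.rTensor V (LinearMap.mulLeft 𝔽 a))

/-- outer right: `(x⊗y⊗z) · b = x⊗y⊗(z*b)`. -/
noncomputable def slot3R (b : V) : (V ⊗[𝔽] V) ⊗[𝔽] V →ₗ[𝔽] (V ⊗[𝔽] V) ⊗[𝔽] V :=
  LinearMap.lTensor (V ⊗[𝔽] V) (LinearMap.mulRight 𝔽 b)

variable {𝔽 V}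

/-- The triple bracket `{{a,b,c}}`. -/
noncomputable def triple (Br : V →ₗ[𝔽] V →ₗ[𝔽] V ⊗[𝔽] V) (a b c : V) :
    (V ⊗[𝔽] V) ⊗[𝔽] V :=
  brL Br a (Br b c) + sigma3 𝔽 V (brL Br b (Br c a)) +
    sigma3 𝔽 V (sigma3 𝔽 V (brL Br c (Br a b)))

variable (𝔽 V)

/-- Skewsymmetry of a 2-fold bracket. -/
def IsSkew (Br : V →ₗ[𝔽] V →ₗ[𝔽] V ⊗[𝔽] V) : Prop :=
  ∀ a b : V, Br a b = - swap2 𝔽 V (Br b a)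

/-- The span of commutators `[V,V]`. -/
def commSub : Submodule 𝔽 V := Submodule.span 𝔽 {x : V | ∃ a b : V, x = a * b - b * a}

variable {𝔽 V}

/-- The associated bracket `{a,b} = m {{a,b}}`. -/
noncomputable def sb (Br : V →ₗ[𝔽] V →ₗ[𝔽] V ⊗[𝔽] V) (a b : V) : V :=
  LinearMap.mul' 𝔽 V (Br a b)

/-- A 2-fold derivation: `D(ab) = (Da)·b + a·(Db)`. -/
def Is2Deriv (D : V →ₗ[𝔽] V ⊗[𝔽] V) : Prop :=
  ∀ a b : V, D (a * b) = ract2 𝔽 V b (D a) + lact2 𝔽 V a (D b)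

/-- `D` and `E` strongly commute: `D_L ∘ E = E_R ∘ D`. -/
def StronglyComm (D E : V →ₗ[𝔽] V ⊗[𝔽] V) : Prop :=
  ∀ f : V, LinearMap.rTensor V D (E f) =
    (TensorProduct.assoc 𝔽 V V V).symm (LinearMap.lTensor V E (D f))


/-- The master-formula bracket `{{f,g}} := Σ_{i,j} (D_j g) • B_{ij} • (D_i f)^σ`,
as a bundled bilinear map. -/
noncomputable def masterBr (𝔽 : Type) [Field 𝔽] (V : Type) [Ring V] [Algebra 𝔽 V]
    {ℓ : ℕ} (D : Fin ℓ → (V →ₗ[𝔽] V ⊗[𝔽] V)) (B : Fin ℓ → Fin ℓ → V ⊗[𝔽] V) :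
    V →ₗ[𝔽] V →ₗ[𝔽] V ⊗[𝔽] V :=
  ∑ i : Fin ℓ, ∑ j : Fin ℓ,
    (LinearMap.lcomp 𝔽 _ (((bullet 𝔽 V).flip (B i j)) ∘ₗ D j)) ∘ₗ
      (bullet 𝔽 V).flip ∘ₗ (swap2 𝔽 V).toLinearMap ∘ₗ D i

theorem bullet_tmul (u v x y : V) :
    bullet 𝔽 V (u ⊗ₜ v) (x ⊗ₜ y) = (u * x) ⊗ₜ[𝔽] (y * v) := rfl

theorem bullet_assoc (X Y Z : V ⊗[𝔽] V) :
    bullet 𝔽 V (bullet 𝔽 V X Y) Z = bullet 𝔽 V X (bullet 𝔽 V Y Z) := by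
  induction X using TensorProduct.induction_on with
  | zero => simp
  | add X X' hX hX' => simp only [map_add, LinearMap.add_apply, hX, hX']
  | tmul u v =>
    induction Y using TensorProduct.induction_on with
    | zero => simp
    | add Y Y' hY hY' => simp only [map_add, LinearMap.add_apply, hY, hY']
    | tmul a b =>
      induction Z using TensorProduct.induction_on with
      | zero => simp
      | add Z Z' hZ hZ' => simp only [map_add, hZ, hZ']
      | tmul x y => simp only [bullet_tmul, mul_assoc]

theorem swap2_bullet (X Y : V ⊗[𝔽] V) :
    swap2 𝔽 V (bullet 𝔽 V X Y) = bullet 𝔽 V (swap2 𝔽 V Y) (swap2 𝔽 V X) := by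
  induction X using TensorProduct.induction_on with
  | zero => simp
  | add X X' hX hX' => simp only [map_add, LinearMap.add_apply, hX, hX']
  | tmul u v =>
    induction Y using TensorProduct.induction_on with
    | zero => simp
    | add Y Y' hY hY' => simp only [map_add, LinearMap.add_apply, hY, hY']
    | tmul x y => simp only [bullet_tmul, TensorProduct.comm_tmul]

theorem masterBr_apply {ℓ : ℕ} (D : Fin ℓ → (V →ₗ[𝔽] V ⊗[𝔽] V))
    (B : Fin ℓ → Fin ℓ → V ⊗[𝔽] V) (f g : V) :
    masterBr 𝔽 V D B f g =
      ∑ i, ∑ j, bullet 𝔽 V (bullet 𝔽 V (D j g) (B i j)) (swap2 𝔽 V (D i f)) := by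
  simp [masterBr, LinearMap.sum_apply]

theorem swap2_masterBr {ℓ : ℕ} (D : Fin ℓ → (V →ₗ[𝔽] V ⊗[𝔽] V))
    {B : Fin ℓ → Fin ℓ → V ⊗[𝔽] V} (hB : ∀ i j, B i j = - swap2 𝔽 V (B j i)) (f g : V) :
    swap2 𝔽 V (masterBr 𝔽 V D B f g) = - masterBr 𝔽 V D B g f := by
  have hterm : ∀ i j, swap2 𝔽 V (bullet 𝔽 V (bullet 𝔽 V (D j g) (B i j)) (swap2 𝔽 V (D i f))) =
      - bullet 𝔽 V (bullet 𝔽 V (D i f) (B j i)) (swap2 𝔽 V (D j g)) := by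
    intro i j
    rw [hB, swap2_bullet, swap2_bullet, TensorProduct.comm_comm, map_neg,
      TensorProduct.comm_comm, map_neg, LinearMap.neg_apply, map_neg, bullet_assoc]
  simp only [masterBr_apply, map_sum, hterm, Finset.sum_neg_distrib]
  exact congrArg Neg.neg Finset.sum_comm

theorem mkQ_mul'_swap2 (X : V ⊗[𝔽] V) :
    (commSub 𝔽 V).mkQ (LinearMap.mul' 𝔽 V (swap2 𝔽 V X)) =
      (commSub 𝔽 V).mkQ (LinearMap.mul' 𝔽 V X) := by
  induction X using TensorProduct.induction_on with
  | zero => simp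
  | add X X' hX hX' => simp only [map_add, hX, hX']
  | tmul u v =>
    refine (Submodule.Quotient.eq _).2 (Submodule.subset_span ⟨v, u, ?_⟩)
    simp

noncomputable def trMasterBr {ℓ : ℕ} (D : Fin ℓ → (V →ₗ[𝔽] V ⊗[𝔽] V))
    (B : Fin ℓ → Fin ℓ → V ⊗[𝔽] V) : V →ₗ[𝔽] V →ₗ[𝔽] V ⧸ commSub 𝔽 V :=
  (masterBr 𝔽 V D B).compr₂ ((commSub 𝔽 V).mkQ ∘ₗ LinearMap.mul' 𝔽 V)

theorem trMasterBr_isAlt [NeZero (2 : 𝔽)] {ℓ : ℕ} (D : Fin ℓ → (V →ₗ[𝔽] V ⊗[𝔽] V))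
    {B : Fin ℓ → Fin ℓ → V ⊗[𝔽] V} (hB : ∀ i j, B i j = - swap2 𝔽 V (B j i)) :
    (trMasterBr D B).IsAlt := by
  intro f
  have hneg : - trMasterBr D B f f = trMasterBr D B f f := by
    simp only [trMasterBr, LinearMap.compr₂_apply, LinearMap.comp_apply]
    rw [← map_neg, ← map_neg, ← swap2_masterBr D hB, mkQ_mul'_swap2]
  have htwo : (2 : 𝔽) • trMasterBr D B f f = 0 := by
    rw [two_smul, ← neg_eq_iff_add_eq_zero, hneg]
  exact (smul_eq_zero.1 htwo).resolve_left two_ne_zero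

end DPA

namespace LinearMap.IsAlt

variable {R M N : Type*} [CommSemiring R] [AddCommMonoid M] [Module R M] [AddCommGroup N]
  [Module R N] {P Q : M →ₗ[R] M →ₗ[R] N} {K : ℕ} {h : ℕ → M}

theorem lenardMagri_snd (hP : P.IsAlt) (hQ : Q.IsAlt)
    (hrec : ∀ n < K, ∀ u, P (h n) u = Q (h (n + 1)) u) {n m : ℕ} (hn : n ≤ K) (hm : m ≤ K) :
    Q (h n) (h m) = 0 := by
  have shift : ∀ n m, n < K → m < K → Q (h n) (h (m + 1)) = P (h n) (h m) := fun n m hn hm => by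
    rw [← hQ.neg, ← hrec m hm, hP.neg]
  have diag : ∀ d n, n + d ≤ K → Q (h n) (h (n + d)) = 0 := by
    intro d
    induction d using Nat.twoStepInduction with
    | zero => exact fun n _ => hQ (h n)
    | one => exact fun n hn => by rw [shift n n (by omega) (by omega), hP (h n)]
    | more d ih _ =>
      intro n hn
      rw [← add_assoc, shift n _ (by omega) (by omega), hrec n (by omega),
        show n + d + 1 = n + 1 + d by omega]
      exact ih (n + 1) (by omega)
  rcases le_total n m with hnm | hmn
  · simpa [Nat.add_sub_cancel' hnm] using diag (m - n) n (by omega)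
  · rw [← hQ.eq_iff]
    simpa [Nat.add_sub_cancel' hmn] using diag (n - m) m (by omega)

theorem lenardMagri (hP : P.IsAlt) (hQ : Q.IsAlt)
    (hrec : ∀ n < K, ∀ u, P (h n) u = Q (h (n + 1)) u) {n m : ℕ} (hn : n ≤ K) (hm : m ≤ K) :
    P (h n) (h m) = 0 ∧ Q (h n) (h m) = 0 := by
  refine ⟨?_, lenardMagri_snd hP hQ hrec hn hm⟩
  rcases hn.lt_or_eq with hn | rfl
  · rw [hrec n hn]
    exact lenardMagri_snd hP hQ hrec hn hm
  rcases hm.lt_or_eq with hm | rfl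
  · rw [hP.eq_iff, hrec m hm]
    exact lenardMagri_snd hP hQ hrec hm le_rfl
  · exact hP _

end LinearMap.IsAlt

theorem statement_15_general (𝔽 : Type) [Field 𝔽] [CharZero 𝔽] (V : Type) [Ring V] [Algebra 𝔽 V]
    {ℓ : ℕ} (D : Fin ℓ → (V →ₗ[𝔽] V ⊗[𝔽] V))
    (B0 B1 : Fin ℓ → Fin ℓ → V ⊗[𝔽] V)
    (hskew0 : ∀ i j, B0 i j = - swap2 𝔽 V (B0 j i))
    (hskew1 : ∀ i j, B1 i j = - swap2 𝔽 V (B1 j i))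
    (N : ℕ) (h : ℕ → V)
    (hrec : ∀ n < N, ∀ u : V,
      LinearMap.mul' 𝔽 V (masterBr 𝔽 V D B0 (h n) u) =
        LinearMap.mul' 𝔽 V (masterBr 𝔽 V D B1 (h (n + 1)) u)) :
    ∀ n ≤ N, ∀ m ≤ N,
      LinearMap.mul' 𝔽 V (masterBr 𝔽 V D B0 (h n) (h m)) ∈ commSub 𝔽 V ∧
      LinearMap.mul' 𝔽 V (masterBr 𝔽 V D B1 (h n) (h m)) ∈ commSub 𝔽 V := by
  intro n hn m hm
  have htr := (trMasterBr_isAlt D hskew0).lenardMagri (trMasterBr_isAlt D hskew1) (h := h)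
    (fun n hn u => congrArg (commSub 𝔽 V).mkQ (hrec n hn u)) hn hm
  simpa only [trMasterBr, LinearMap.compr₂_apply, LinearMap.comp_apply, Submodule.mkQ_apply,
    Submodule.Quotient.mk_eq_zero] using htr

/-- Lenard-Magri scheme for a pair of skewsymmetric 2-fold brackets
given by the master formula: if `{h_n, u}₀ = {h_{n+1}, u}₁` for all `u` and
`n = 0,…,N−1`, then all `{h_n, h_m}_a` lie in `[V,V]`, i.e. the `tr(h_n)` are in
involution with respect to both induced brackets. -/
theorem statement_15 (𝔽 : Type) [Field 𝔽] [CharZero 𝔽] (V : Type) [Ring V] [Algebra 𝔽 V]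
    {ℓ : ℕ} (D : Fin ℓ → (V →ₗ[𝔽] V ⊗[𝔽] V)) (hD : ∀ i, Is2Deriv (D i))
    (B0 B1 : Fin ℓ → Fin ℓ → V ⊗[𝔽] V)
    (hskew0 : ∀ i j, B0 i j = - swap2 𝔽 V (B0 j i))
    (hskew1 : ∀ i j, B1 i j = - swap2 𝔽 V (B1 j i))
    (N : ℕ) (h : ℕ → V)
    (hrec : ∀ n < N, ∀ u : V,
      LinearMap.mul' 𝔽 V (masterBr 𝔽 V D B0 (h n) u) =
        LinearMap.mul' 𝔽 V (masterBr 𝔽 V D B1 (h (n + 1)) u)) :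
    ∀ n ≤ N, ∀ m ≤ N,
      LinearMap.mul' 𝔽 V (masterBr 𝔽 V D B0 (h n) (h m)) ∈ commSub 𝔽 V ∧
      LinearMap.mul' 𝔽 V (masterBr 𝔽 V D B1 (h n) (h m)) ∈ commSub 𝔽 V :=
  statement_15_general 𝔽 V D B0 B1 hskew0 hskew1 N h hrec
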